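/- arXiv:2510.03621 — 7 statements merged into one kernel-verified Lean document; each statement's English description precedes it below -/
import Mathlib

section
/- Let G be an E-graph and let H^wr(G) denote the set of weakly reversible E-graphs H for which G admits a realization with respect to H. If H₁, H₂ ∈ H^wr(G), then H₁ ∪ H₂ ∈ H^wr(G). Consequently, if H^wr(G) is nonempty and finite, the partially ordered set (H^wr(G), ⊆) has a unique maximal element. -/
open scoped Classical

/-- The species-formation function of an E-graph with edge labels. -/
noncomputable def specForm {n : ℕ} (E : Finset ((Fin n → ℝ) × (Fin n → ℝ)))
    (κ : ((Fin n → ℝ) × (Fin n → ℝ)) → ℝ) (x : Fin n → ℝ) : Fin n → ℝ :=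
  ∑ e ∈ E, (κ e * ∏ i, x i ^ e.1 i) • (e.2 - e.1)

/-- An E-graph (given by its edge set) is weakly reversible if for any two points there is
a directed path from one to the other iff there is one back. -/
def weaklyReversible {n : ℕ} (E : Finset ((Fin n → ℝ) × (Fin n → ℝ))) : Prop :=
  ∀ y y' : Fin n → ℝ,
    Relation.ReflTransGen (fun a b => (a, b) ∈ E) y y' ↔
      Relation.ReflTransGen (fun a b => (a, b) ∈ E) y' y

/-- `G` admits a realization with respect to `H`: there are positive edge labels on both
graphs giving the same species-formation function on the positive orthant. -/
def realizes {n : ℕ} (EG EH : Finset ((Fin n → ℝ) × (Fin n → ℝ))) : Prop :=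
  ∃ κ lam : ((Fin n → ℝ) × (Fin n → ℝ)) → ℝ,
    (∀ e ∈ EG, 0 < κ e) ∧ (∀ e ∈ EH, 0 < lam e) ∧
      ∀ x : Fin n → ℝ, (∀ i, 0 < x i) → specForm EG κ x = specForm EH lam x

/-- The set `H^wr(G)` of weakly reversible E-graphs with respect to which `G` admits a
realization. -/
def Hwr {n : ℕ} (EG : Finset ((Fin n → ℝ) × (Fin n → ℝ))) :
    Set (Finset ((Fin n → ℝ) × (Fin n → ℝ))) :=
  {EH | weaklyReversible EH ∧ realizes EG EH}

/-!
Weak reversibility is the statement that every edge `a → b` can be undone by a path from `b`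
back to `a`, which survives passing to a larger edge set; hence it is preserved by unions.
The species-formation function is linear in the edge labels, and extending labels by zero does
not change it, so adding realizations of `G` with respect to `H₁` and `H₂` gives one with respect
to `H₁ ∪ H₂`. Thus `H^wr(G)` is closed under `⊔ = ∪`, and a nonempty finite sup-closed set has
its supremum as greatest element.
-/

theorem SupClosed.existsUnique_isGreatest {α : Type*} [SemilatticeSup α] {s : Set α}
    (hs : SupClosed s) (hne : s.Nonempty) (hfin : s.Finite) : ∃! a, IsGreatest s a := by
  have ht : hfin.toFinset.Nonempty := by simpa using hne
  have hmax : IsGreatest s (hfin.toFinset.sup' ht id) :=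
    ⟨hs.finsetSup'_mem ht fun _ hb => by simpa using hb,
      fun _ hb => Finset.le_sup' id (by simpa using hb)⟩
  exact ⟨_, hmax, fun _ hb => hb.unique hmax⟩

theorem Relation.ReflTransGen.swap_of_forall_rel {α : Type*} {r : α → α → Prop}
    (h : ∀ a b, r a b → Relation.ReflTransGen r b a) {a b : α}
    (hab : Relation.ReflTransGen r a b) : Relation.ReflTransGen r b a := by
  induction hab with
  | refl => exact .refl
  | tail _ hstep ih => exact (h _ _ hstep).trans ih

section EGraph

variable {n : ℕ}

theorem weaklyReversible_iff_forall_mem {E : Finset ((Fin n → ℝ) × (Fin n → ℝ))} :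
    weaklyReversible E ↔
      ∀ e ∈ E, Relation.ReflTransGen (fun a b => (a, b) ∈ E) e.2 e.1 := by
  refine ⟨fun h e he => (h e.1 e.2).mp (.single he), fun h y y' => ?_⟩
  have hback : ∀ a b, (a, b) ∈ E → Relation.ReflTransGen (fun a b => (a, b) ∈ E) b a :=
    fun a b hab => h (a, b) hab
  exact ⟨.swap_of_forall_rel hback, .swap_of_forall_rel hback⟩

theorem weaklyReversible.union {E₁ E₂ : Finset ((Fin n → ℝ) × (Fin n → ℝ))}
    (h₁ : weaklyReversible E₁) (h₂ : weaklyReversible E₂) : weaklyReversible (E₁ ∪ E₂) := by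
  rw [weaklyReversible_iff_forall_mem] at h₁ h₂ ⊢
  intro e he
  rcases Finset.mem_union.mp he with he | he
  · exact .mono (fun _ _ hab => Finset.mem_union_left _ hab) _ _ (h₁ e he)
  · exact .mono (fun _ _ hab => Finset.mem_union_right _ hab) _ _ (h₂ e he)

theorem specForm_add (E : Finset ((Fin n → ℝ) × (Fin n → ℝ)))
    (κ₁ κ₂ : ((Fin n → ℝ) × (Fin n → ℝ)) → ℝ) (x : Fin n → ℝ) :
    specForm E (κ₁ + κ₂) x = specForm E κ₁ x + specForm E κ₂ x := by
  simp only [specForm, Pi.add_apply, add_mul, add_smul, Finset.sum_add_distrib]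

theorem specForm_indicator_of_subset {E E' : Finset ((Fin n → ℝ) × (Fin n → ℝ))} (h : E' ⊆ E)
    (κ : ((Fin n → ℝ) × (Fin n → ℝ)) → ℝ) (x : Fin n → ℝ) :
    specForm E ((E' : Set ((Fin n → ℝ) × (Fin n → ℝ))).indicator κ) x = specForm E' κ x :=
  Finset.sum_indicator_subset_of_eq_zero κ
    (fun e k => (k * ∏ i, x i ^ e.1 i) • (e.2 - e.1)) h fun _ => by simp

theorem realizes.union {EG EH₁ EH₂ : Finset ((Fin n → ℝ) × (Fin n → ℝ))}
    (h₁ : realizes EG EH₁) (h₂ : realizes EG EH₂) : realizes EG (EH₁ ∪ EH₂) := by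
  obtain ⟨κ₁, lam₁, hκ₁, hlam₁, heq₁⟩ := h₁
  obtain ⟨κ₂, lam₂, hκ₂, hlam₂, heq₂⟩ := h₂
  set μ₁ := (EH₁ : Set ((Fin n → ℝ) × (Fin n → ℝ))).indicator lam₁
  set μ₂ := (EH₂ : Set ((Fin n → ℝ) × (Fin n → ℝ))).indicator lam₂
  have hμ₁ : ∀ e, 0 ≤ μ₁ e := Set.indicator_nonneg fun e he => (hlam₁ e he).le
  have hμ₂ : ∀ e, 0 ≤ μ₂ e := Set.indicator_nonneg fun e he => (hlam₂ e he).le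
  refine ⟨κ₁ + κ₂, μ₁ + μ₂, fun e he => add_pos (hκ₁ e he) (hκ₂ e he), fun e he => ?_,
    fun x hx => ?_⟩
  · rcases Finset.mem_union.mp he with he | he
    · exact add_pos_of_pos_of_nonneg (by simpa [μ₁, he] using hlam₁ e he) (hμ₂ e)
    · exact add_pos_of_nonneg_of_pos (hμ₁ e) (by simpa [μ₂, he] using hlam₂ e he)
  · rw [specForm_add, specForm_add, heq₁ x hx, heq₂ x hx,
      specForm_indicator_of_subset Finset.subset_union_left,
      specForm_indicator_of_subset Finset.subset_union_right]

theorem supClosed_Hwr (EG : Finset ((Fin n → ℝ) × (Fin n → ℝ))) : SupClosed (Hwr EG) :=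
  fun _ h₁ _ h₂ => ⟨h₁.1.union h₂.1, h₁.2.union h₂.2⟩

end EGraph

/-- `H^wr(G)` is closed under unions; consequently, if it is nonempty
and finite, it has a unique maximal element. -/
theorem stmt_3 {n : ℕ} (EG : Finset ((Fin n → ℝ) × (Fin n → ℝ))) :
    (∀ H₁ H₂, H₁ ∈ Hwr EG → H₂ ∈ Hwr EG → H₁ ∪ H₂ ∈ Hwr EG) ∧
    ((Hwr EG).Nonempty → (Hwr EG).Finite →
      ∃! M, M ∈ Hwr EG ∧ ∀ H ∈ Hwr EG, H ⊆ M) :=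
  ⟨fun _ _ h₁ h₂ => supClosed_Hwr EG h₁ h₂,
    fun hne hfin => (supClosed_Hwr EG).existsUnique_isGreatest hne hfin⟩
end

section
/- Let H be an E-graph in ℝ^n containing three distinct collinear vertices y₁, y₂, y₃ with y₂ strictly between y₁ and y₃, and suppose (y₁ → y₃) is an edge of H. Let a = |y₂ − y₁| and b = |y₃ − y₂|, and let H' be the E-graph obtained from H by deleting the edge y₁ → y₃ and adding the edges y₁ → y₂, y₂ → y₁, and y₂ → y₃ (if not already present). Then for any vertex-balanced flux γ on H, the flux γ' on H' defined by γ'_{y₁→y₂} = γ_{y₁→y₂} + ((a+b)/a)·γ_{y₁→y₃}, γ'_{y₂→y₁} = γ_{y₂→y₁} + (b/a)·γ_{y₁→y₃}, γ'_{y₂→y₃} = γ_{y₂→y₃} + γ_{y₁→y₃}, and γ' = γ on all other edges, is a vertex-balanced flux on H', and (H,γ) and (H',γ') are dynamically equal. -/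
open scoped Classical

/-- Lemma on collinear vertices.  Let `H` be an E-graph containing three
distinct collinear vertices `y₁, y₂, y₃` with `y₂` strictly between `y₁` and `y₃`
(`y₂ = y₁ + (a/(a+b)) • (y₃ - y₁)` with `a, b > 0`), and suppose `(y₁ → y₃)` is an edge
of `H`.  Let `H'` be obtained from `H` by deleting `y₁ → y₃` and adding
`y₁ → y₂`, `y₂ → y₁`, `y₂ → y₃`.  Then for any vertex-balanced flux `γ` on `H`, the
modified flux `γ'` is a (positive) vertex-balanced flux on `H'`, and `(H,γ)` and
`(H',γ')` are dynamically equal. -/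
theorem stmt_4 {n : ℕ}
    (EH : Finset ((Fin n → ℝ) × (Fin n → ℝ)))
    (y₁ y₂ y₃ : Fin n → ℝ) (a b : ℝ)
    (ha : 0 < a) (hb : 0 < b)
    (h12 : y₁ ≠ y₂) (h13 : y₁ ≠ y₃) (h23 : y₂ ≠ y₃)
    (hbetween : y₂ = y₁ + (a / (a + b)) • (y₃ - y₁))
    (hedge : (y₁, y₃) ∈ EH)
    (γ : ((Fin n → ℝ) × (Fin n → ℝ)) → ℝ)
    (hγpos : ∀ e ∈ EH, 0 < γ e)
    (hbal : ∀ v : Fin n → ℝ,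
      ∑ e ∈ EH.filter (fun e => e.2 = v), γ e = ∑ e ∈ EH.filter (fun e => e.1 = v), γ e)
    (EH' : Finset ((Fin n → ℝ) × (Fin n → ℝ)))
    (hEH' : EH' = (EH.erase (y₁, y₃)) ∪ {(y₁, y₂), (y₂, y₁), (y₂, y₃)})
    (γ₀ : ((Fin n → ℝ) × (Fin n → ℝ)) → ℝ)
    (hγ₀ : γ₀ = fun e => if e ∈ EH then γ e else 0)
    (γ' : ((Fin n → ℝ) × (Fin n → ℝ)) → ℝ)
    (hγ' : γ' = fun e =>
      if e = (y₁, y₂) then γ₀ (y₁, y₂) + ((a + b) / a) * γ (y₁, y₃)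
      else if e = (y₂, y₁) then γ₀ (y₂, y₁) + (b / a) * γ (y₁, y₃)
      else if e = (y₂, y₃) then γ₀ (y₂, y₃) + γ (y₁, y₃)
      else γ₀ e) :
    (∀ e ∈ EH', 0 < γ' e) ∧
    (∀ v : Fin n → ℝ,
      ∑ e ∈ EH'.filter (fun e => e.2 = v), γ' e
        = ∑ e ∈ EH'.filter (fun e => e.1 = v), γ' e) ∧
    (∀ v : Fin n → ℝ,
      ∑ e ∈ EH.filter (fun e => e.1 = v), γ e • (e.2 - e.1)
        = ∑ e ∈ EH'.filter (fun e => e.1 = v), γ' e • (e.2 - e.1)) := by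
  have ha' : a ≠ 0 := ha.ne'
  have hab : a + b ≠ 0 := by positivity
  set g : ℝ := γ (y₁, y₃) with hg
  have hgpos : 0 < g := hγpos _ hedge
  set c₁ : ℝ := ((a + b) / a) * g with hc₁
  set c₂ : ℝ := (b / a) * g with hc₂
  -- pair distinctness
  have d10 : ((y₁, y₂) : _ × _) ≠ (y₁, y₃) := by simp [Prod.ext_iff, h23]
  have d20 : ((y₂, y₁) : _ × _) ≠ (y₁, y₃) := by simp [Prod.ext_iff, Ne.symm h12]
  have d30 : ((y₂, y₃) : _ × _) ≠ (y₁, y₃) := by simp [Prod.ext_iff, Ne.symm h12]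
  have d12 : ((y₁, y₂) : _ × _) ≠ (y₂, y₁) := by simp [Prod.ext_iff, h12]
  have d13 : ((y₁, y₂) : _ × _) ≠ (y₂, y₃) := by simp [Prod.ext_iff, h12]
  have d23 : ((y₂, y₁) : _ × _) ≠ (y₂, y₃) := by simp [Prod.ext_iff, h13]
  have hγ₀nonneg : ∀ e, 0 ≤ γ₀ e := by
    intro e; rw [hγ₀]; dsimp only; split
    · exact (hγpos _ ‹_›).le
    · exact le_refl 0
  have hγ₀EH : ∀ e ∈ EH, γ₀ e = γ e := by intro e he; rw [hγ₀]; simp [he]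
  have hγ₀nEH : ∀ e, e ∉ EH → γ₀ e = 0 := by intro e he; rw [hγ₀]; simp [he]
  set S : Finset ((Fin n → ℝ) × (Fin n → ℝ)) :=
    insert (y₁, y₂) (insert (y₂, y₁) (insert (y₂, y₃) EH)) with hSdef
  have hEHS : EH ⊆ S := by
    intro e he; simp [hSdef, he]
  have he0S : ((y₁, y₃) : _ × _) ∈ S := hEHS hedge
  have he1S : ((y₁, y₂) : _ × _) ∈ S := by simp [hSdef]
  have he2S : ((y₂, y₁) : _ × _) ∈ S := by simp [hSdef]
  have he3S : ((y₂, y₃) : _ × _) ∈ S := by simp [hSdef]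
  have hS : (EH.erase (y₁, y₃)) ∪ {(y₁, y₂), (y₂, y₁), (y₂, y₃)} = S.erase (y₁, y₃) := by
    ext e
    simp only [Finset.mem_union, Finset.mem_erase, Finset.mem_insert, Finset.mem_singleton,
      hSdef]
    constructor
    · rintro (⟨hne, he⟩ | rfl | rfl | rfl)
      · exact ⟨hne, Or.inr (Or.inr (Or.inr he))⟩
      · exact ⟨d10, Or.inl rfl⟩
      · exact ⟨d20, Or.inr (Or.inl rfl)⟩
      · exact ⟨d30, Or.inr (Or.inr (Or.inl rfl))⟩
    · rintro ⟨hne, (rfl | rfl | rfl | he)⟩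
      · exact Or.inr (Or.inl rfl)
      · exact Or.inr (Or.inr (Or.inl rfl))
      · exact Or.inr (Or.inr (Or.inr rfl))
      · exact Or.inl ⟨hne, he⟩
  have hγ'0 : γ' (y₁, y₃) = g := by
    rw [hγ', hg]; dsimp only
    rw [if_neg d10.symm, if_neg d20.symm, if_neg d30.symm, hγ₀EH _ hedge]
  have hγ'e : ∀ e, γ' e = γ₀ e + ((if e = (y₁, y₂) then c₁ else 0)
      + (if e = (y₂, y₁) then c₂ else 0) + (if e = (y₂, y₃) then g else 0)) := by
    intro e
    rw [hγ']; dsimp only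
    rcases eq_or_ne e (y₁, y₂) with rfl | h1
    · rw [if_pos rfl, if_pos rfl, if_neg d12, if_neg d13]; ring
    rcases eq_or_ne e (y₂, y₁) with rfl | h2
    · rw [if_neg h1, if_pos rfl, if_neg h1, if_pos rfl, if_neg d23]; ring
    rcases eq_or_ne e (y₂, y₃) with rfl | h3
    · rw [if_neg h1, if_neg h2, if_pos rfl, if_neg h1, if_neg h2, if_pos rfl]; ring
    · rw [if_neg h1, if_neg h2, if_neg h3, if_neg h1, if_neg h2, if_neg h3]; ring
  have key : ∀ {M : Type} [AddCommGroup M] [Module ℝ M] (p : ((Fin n → ℝ) × (Fin n → ℝ)) → Prop)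
      [DecidablePred p] (f : ((Fin n → ℝ) × (Fin n → ℝ)) → M),
      ∑ e ∈ ((EH.erase (y₁, y₃)) ∪ {(y₁, y₂), (y₂, y₁), (y₂, y₃)}).filter p, γ' e • f e
        = ∑ e ∈ EH.filter p, γ e • f e
          + ((if p (y₁, y₂) then c₁ • f (y₁, y₂) else 0)
            + (if p (y₂, y₁) then c₂ • f (y₂, y₁) else 0)
            + (if p (y₂, y₃) then g • f (y₂, y₃) else 0)
            - (if p (y₁, y₃) then g • f (y₁, y₃) else 0)) := by
    intro M _ _ p _ f
    rw [hS, Finset.filter_erase]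
    have step1 : ∑ e ∈ (S.filter p).erase (y₁, y₃), γ' e • f e
        = ∑ e ∈ S.filter p, γ' e • f e - (if p (y₁, y₃) then g • f (y₁, y₃) else 0) := by
      by_cases hp : p (y₁, y₃)
      · rw [Finset.sum_erase_eq_sub (Finset.mem_filter.mpr ⟨he0S, hp⟩), if_pos hp, hγ'0]
      · rw [Finset.erase_eq_of_notMem, if_neg hp, sub_zero]
        simp [Finset.mem_filter, hp]
    rw [step1]
    have step2 : ∑ e ∈ S.filter p, γ' e • f e
        = ∑ e ∈ S.filter p, γ₀ e • f e
          + ((if p (y₁, y₂) then c₁ • f (y₁, y₂) else 0)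
            + (if p (y₂, y₁) then c₂ • f (y₂, y₁) else 0)
            + (if p (y₂, y₃) then g • f (y₂, y₃) else 0)) := by
      have : ∀ e ∈ S.filter p, γ' e • f e
          = γ₀ e • f e + ((if e = (y₁, y₂) then c₁ • f e else 0)
            + (if e = (y₂, y₁) then c₂ • f e else 0) + (if e = (y₂, y₃) then g • f e else 0)) := by
        intro e _
        simp only [hγ'e e, add_smul, ite_smul, zero_smul]
      rw [Finset.sum_congr rfl this, Finset.sum_add_distrib, Finset.sum_add_distrib,
        Finset.sum_add_distrib, Finset.sum_ite_eq', Finset.sum_ite_eq', Finset.sum_ite_eq']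
      congr 1
      simp [Finset.mem_filter, he1S, he2S, he3S]
    rw [step2]
    have step3 : ∑ e ∈ S.filter p, γ₀ e • f e = ∑ e ∈ EH.filter p, γ e • f e := by
      rw [← Finset.sum_subset (Finset.filter_subset_filter p hEHS)]
      · exact Finset.sum_congr rfl fun e he => by
          rw [hγ₀EH _ (Finset.mem_filter.mp he).1]
      · intro e heS heEH
        have : e ∉ EH := fun h => heEH (Finset.mem_filter.mpr ⟨h, (Finset.mem_filter.mp heS).2⟩)
        rw [hγ₀nEH _ this, zero_smul]
    rw [step3]
    abel
  refine ⟨?_, ?_, ?_⟩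
  · -- positivity
    intro e he
    rcases eq_or_ne e (y₁, y₂) with rfl | h1
    · rw [hγ']; dsimp only; rw [if_pos rfl]
      have := hγ₀nonneg (y₁, y₂)
      have hpos : 0 < (a + b) / a * g := by positivity
      linarith
    rcases eq_or_ne e (y₂, y₁) with rfl | h2
    · rw [hγ']; dsimp only; rw [if_neg h1, if_pos rfl]
      have := hγ₀nonneg (y₂, y₁)
      have hpos : 0 < b / a * g := by positivity
      linarith
    rcases eq_or_ne e (y₂, y₃) with rfl | h3
    · rw [hγ']; dsimp only; rw [if_neg h1, if_neg h2, if_pos rfl]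
      have := hγ₀nonneg (y₂, y₃)
      linarith
    · have heEH : e ∈ EH := by
        rw [hEH'] at he
        rcases Finset.mem_union.mp he with h | h
        · exact Finset.mem_of_mem_erase h
        · simp only [Finset.mem_insert, Finset.mem_singleton] at h
          rcases h with h | h | h <;> [exact absurd h h1; exact absurd h h2; exact absurd h h3]
      rw [hγ']; dsimp only; rw [if_neg h1, if_neg h2, if_neg h3, hγ₀EH _ heEH]
      exact hγpos _ heEH
  · -- balance
    intro v
    have h1 : ∑ e ∈ ((EH.erase (y₁, y₃)) ∪ {(y₁, y₂), (y₂, y₁), (y₂, y₃)}).filter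
          (fun e => e.2 = v), γ' e
        = ∑ e ∈ EH.filter (fun e => e.2 = v), γ e
          + ((if y₂ = v then c₁ else 0) + (if y₁ = v then c₂ else 0)
            + (if y₃ = v then g else 0) - (if y₃ = v then g else 0)) := by
      have := key (fun e => e.2 = v) (fun _ => (1 : ℝ))
      simp only [smul_eq_mul, mul_one] at this
      exact this
    have h2 : ∑ e ∈ ((EH.erase (y₁, y₃)) ∪ {(y₁, y₂), (y₂, y₁), (y₂, y₃)}).filter
          (fun e => e.1 = v), γ' e
        = ∑ e ∈ EH.filter (fun e => e.1 = v), γ e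
          + ((if y₁ = v then c₁ else 0) + (if y₂ = v then c₂ else 0)
            + (if y₂ = v then g else 0) - (if y₁ = v then g else 0)) := by
      have := key (fun e => e.1 = v) (fun _ => (1 : ℝ))
      simp only [smul_eq_mul, mul_one] at this
      exact this
    rw [hEH', h1, h2, hbal v]
    congr 1
    by_cases h1v : y₁ = v
    · have h2v : ¬ y₂ = v := fun h => h12 (h1v.trans h.symm)
      have h3v : ¬ y₃ = v := fun h => h13 (h1v.trans h.symm)
      rw [if_neg h2v, if_pos h1v, if_neg h3v, if_pos h1v, if_neg h2v, if_neg h2v, if_pos h1v,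
        hc₁, hc₂]
      field_simp
      ring
    · by_cases h2v : y₂ = v
      · have h3v : ¬ y₃ = v := fun h => h23 (h2v.trans h.symm)
        rw [if_pos h2v, if_neg h1v, if_neg h3v, if_neg h1v, if_pos h2v, if_pos h2v, if_neg h1v,
          hc₁, hc₂]
        field_simp
        ring
      · by_cases h3v : y₃ = v
        · rw [if_neg h2v, if_neg h1v, if_pos h3v, if_neg h1v, if_neg h2v, if_neg h2v, if_neg h1v]
          ring
        · rw [if_neg h2v, if_neg h1v, if_neg h3v, if_neg h1v, if_neg h2v, if_neg h2v, if_neg h1v]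
  · -- dynamical equality
    intro v
    have h2 : ∑ e ∈ ((EH.erase (y₁, y₃)) ∪ {(y₁, y₂), (y₂, y₁), (y₂, y₃)}).filter
          (fun e => e.1 = v), γ' e • (e.2 - e.1)
        = ∑ e ∈ EH.filter (fun e => e.1 = v), γ e • (e.2 - e.1)
          + ((if y₁ = v then c₁ • (y₂ - y₁) else 0) + (if y₂ = v then c₂ • (y₁ - y₂) else 0)
            + (if y₂ = v then g • (y₃ - y₂) else 0)
            - (if y₁ = v then g • (y₃ - y₁) else 0)) := by
      exact key (fun e => e.1 = v) (fun e => e.2 - e.1)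
    rw [hEH', h2, left_eq_add]
    by_cases h1v : y₁ = v
    · have h2v : ¬ y₂ = v := fun h => h12 (h1v.trans h.symm)
      rw [if_pos h1v, if_neg h2v, if_neg h2v, if_pos h1v, hc₁, hbetween]
      match_scalars <;> field_simp <;> ring
    · by_cases h2v : y₂ = v
      · rw [if_neg h1v, if_pos h2v, if_pos h2v, if_neg h1v, hc₂, hbetween]
        match_scalars <;> field_simp <;> ring
      · rw [if_neg h1v, if_neg h2v, if_neg h2v, if_neg h1v]
        simp
end

section
/- Let β ∈ ℝ_{>0}^6 satisfy β₁ = β₃ and β₂ + β₆ = β₄ + β₅. Then the following are equivalent: (i) there exist γ₇, γ₈ ≥ 0 and γ₁,…,γ₆ ≥ 0 with γ₁ = β₄ − β₆ + γ₈, γ₂ = β₂, γ₃ = β₁ − γ₈, γ₄ = β₄, γ₅ = β₅ − γ₈, γ₆ = β₄ − β₁ + γ₈, γ₇ = β₁ + β₆ − β₄ − γ₈; (ii) |β₄ − β₆| ≤ β₁ ≤ β₄ + β₅. -/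
/-- For `β ∈ ℝ_{>0}^6` with `β₁ = β₃` and `β₂ + β₆ = β₄ + β₅`:
there exists `γ₈ ≥ 0` making the seven affine expressions
`γ₁ = β₄ − β₆ + γ₈`, `γ₂ = β₂`, `γ₃ = β₁ − γ₈`, `γ₄ = β₄`, `γ₅ = β₅ − γ₈`,
`γ₆ = β₄ − β₁ + γ₈`, `γ₇ = β₁ + β₆ − β₄ − γ₈` all nonnegative, iff
`|β₄ − β₆| ≤ β₁ ≤ β₄ + β₅`. -/
theorem stmt_8 (β : Fin 6 → ℝ) (hpos : ∀ i, 0 < β i)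
    (h1 : β 0 = β 2) (h2 : β 1 + β 5 = β 3 + β 4) :
    (∃ g8 : ℝ, 0 ≤ g8 ∧
        0 ≤ β 3 - β 5 + g8 ∧
        0 ≤ β 1 ∧
        0 ≤ β 0 - g8 ∧
        0 ≤ β 3 ∧
        0 ≤ β 4 - g8 ∧
        0 ≤ β 3 - β 0 + g8 ∧
        0 ≤ β 0 + β 5 - β 3 - g8)
    ↔ (|β 3 - β 5| ≤ β 0 ∧ β 0 ≤ β 3 + β 4) := by
  have h0 := hpos 0
  have h1' := hpos 1
  have h3 := hpos 3
  have h4 := hpos 4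
  have h5 := hpos 5
  constructor
  · rintro ⟨g, hg, a1, a2, a3, a4, a5, a6, a7⟩
    rw [abs_le]
    constructor
    · constructor <;> linarith
    · linarith
  · rintro ⟨habs, hub⟩
    rw [abs_le] at habs
    obtain ⟨hl, hr⟩ := habs
    refine ⟨max 0 (max (β 5 - β 3) (β 0 - β 3)), le_max_left _ _, ?_, le_of_lt h1', ?_, le_of_lt h3, ?_, ?_, ?_⟩
    · have := le_max_left (β 5 - β 3) (β 0 - β 3)
      have := le_max_right 0 (max (β 5 - β 3) (β 0 - β 3))
      linarith
    · have : max 0 (max (β 5 - β 3) (β 0 - β 3)) ≤ β 0 := by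
        apply max_le (le_of_lt h0)
        apply max_le <;> linarith
      linarith
    · have : max 0 (max (β 5 - β 3) (β 0 - β 3)) ≤ β 4 := by
        apply max_le (le_of_lt h4)
        apply max_le <;> linarith
      linarith
    · have h := le_max_right (β 5 - β 3) (β 0 - β 3)
      have h' := le_max_right 0 (max (β 5 - β 3) (β 0 - β 3))
      linarith
    · have : max 0 (max (β 5 - β 3) (β 0 - β 3)) ≤ β 0 + β 5 - β 3 := by
        apply max_le (by linarith)
        apply max_le <;> linarith
      linarith
end

section
/- Let β ∈ ℝ_{>0}^8 satisfy β₁ − β₅ = β₃ − β₇ and β₂ − β₆ = β₄ − β₈. Then the inequality max(β₁, β₈) − β₄ − β₅ ≤ min(β₃, β₆) holds if and only if (β₁ − β₈)(β₃ − β₆) ≤ (β₂ + β₅)(β₄ + β₇), and the inequality −min(β₂, β₅) − min(β₄, β₇) ≤ β₁ − β₅ − β₂ + β₆ holds if and only if (β₂ − β₅)(β₄ − β₇) ≤ (β₁ + β₈)(β₃ + β₆). -/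
/-- For `β ∈ ℝ_{>0}^8` with `β₁ − β₅ = β₃ − β₇` and `β₂ − β₆ = β₄ − β₈`:
`max(β₁, β₈) − β₄ − β₅ ≤ min(β₃, β₆)` iff `(β₁ − β₈)(β₃ − β₆) ≤ (β₂ + β₅)(β₄ + β₇)`,
and `−min(β₂, β₅) − min(β₄, β₇) ≤ β₁ − β₅ − β₂ + β₆` iff
`(β₂ − β₅)(β₄ − β₇) ≤ (β₁ + β₈)(β₃ + β₆)`. -/
theorem stmt_9 (β : Fin 8 → ℝ) (hpos : ∀ i, 0 < β i)
    (h1 : β 0 - β 4 = β 2 - β 6) (h2 : β 1 - β 5 = β 3 - β 7) :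
    ((max (β 0) (β 7) - β 3 - β 4 ≤ min (β 2) (β 5)) ↔
      ((β 0 - β 7) * (β 2 - β 5) ≤ (β 1 + β 4) * (β 3 + β 6))) ∧
    ((-(min (β 1) (β 4)) - min (β 3) (β 6) ≤ β 0 - β 4 - β 1 + β 5) ↔
      ((β 1 - β 4) * (β 3 - β 6) ≤ (β 0 + β 7) * (β 2 + β 5))) := by
  have p0 := hpos 0; have p1 := hpos 1; have p2 := hpos 2; have p3 := hpos 3
  have p4 := hpos 4; have p5 := hpos 5; have p6 := hpos 6; have p7 := hpos 7
  have e1 : β 1 = β 5 + β 3 - β 7 := by linarith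
  have e6 : β 6 = β 2 - β 0 + β 4 := by linarith
  have key1 : (β 1 + β 4) * (β 3 + β 6) - (β 0 - β 7) * (β 2 - β 5)
      = (β 3 + β 4 - (β 0 - β 5)) * (β 3 + β 4 - (β 7 - β 2)) := by
    rw [e1, e6]; ring
  have key2 : (β 0 + β 7) * (β 2 + β 5) - (β 1 - β 4) * (β 3 - β 6)
      = (β 0 + β 3 + β 5 - β 4) * (β 0 + β 5 + β 6 - β 1) := by
    rw [e1, e6]; ring
  constructor
  · constructor
    · intro h
      have hu : β 0 - β 5 ≤ β 3 + β 4 := by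
        have := le_max_left (β 0) (β 7)
        have := min_le_right (β 2) (β 5)
        linarith
      have hv : β 7 - β 2 ≤ β 3 + β 4 := by
        have := le_max_right (β 0) (β 7)
        have := min_le_left (β 2) (β 5)
        linarith
      linarith [key1, mul_nonneg (by linarith : (0:ℝ) ≤ β 3 + β 4 - (β 0 - β 5))
        (by linarith : (0:ℝ) ≤ β 3 + β 4 - (β 7 - β 2))]
    · intro h
      have hprod : 0 ≤ (β 3 + β 4 - (β 0 - β 5)) * (β 3 + β 4 - (β 7 - β 2)) := by
        linarith [key1, h]
      have hu : β 0 - β 5 ≤ β 3 + β 4 := by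
        by_contra hc
        push_neg at hc
        have hv' : β 7 - β 2 < β 3 + β 4 := by linarith
        linarith [hprod, mul_pos (by linarith : (0:ℝ) < (β 0 - β 5) - (β 3 + β 4))
          (by linarith : (0:ℝ) < β 3 + β 4 - (β 7 - β 2))]
      have hv : β 7 - β 2 ≤ β 3 + β 4 := by
        by_contra hc
        push_neg at hc
        have hu' : β 0 - β 5 < β 3 + β 4 := by linarith
        linarith [hprod, mul_pos (by linarith : (0:ℝ) < β 3 + β 4 - (β 0 - β 5))
          (by linarith : (0:ℝ) < (β 7 - β 2) - (β 3 + β 4))]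
      have m1 : β 0 - β 3 - β 4 ≤ min (β 2) (β 5) := le_min (by linarith) (by linarith)
      have m2 : β 7 - β 3 - β 4 ≤ min (β 2) (β 5) := le_min (by linarith) (by linarith)
      rcases max_cases (β 0) (β 7) with ⟨he, _⟩ | ⟨he, _⟩ <;> rw [he] <;> linarith
  · constructor
    · intro h
      have hX : 0 ≤ β 0 + β 3 + β 5 - β 4 := by
        have := min_le_left (β 1) (β 4)
        have := min_le_left (β 3) (β 6)
        linarith
      have hY : 0 ≤ β 0 + β 5 + β 6 - β 1 := by
        have := min_le_right (β 1) (β 4)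
        have := min_le_right (β 3) (β 6)
        linarith
      linarith [key2, mul_nonneg hX hY]
    · intro h
      have hprod : 0 ≤ (β 0 + β 3 + β 5 - β 4) * (β 0 + β 5 + β 6 - β 1) := by
        linarith [key2, h]
      have hX : 0 ≤ β 0 + β 3 + β 5 - β 4 := by
        by_contra hc
        push_neg at hc
        have hY' : 0 < β 0 + β 5 + β 6 - β 1 := by linarith
        linarith [hprod, mul_pos (by linarith : (0:ℝ) < -(β 0 + β 3 + β 5 - β 4)) hY']
      have hY : 0 ≤ β 0 + β 5 + β 6 - β 1 := by
        by_contra hc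
        push_neg at hc
        have hX' : 0 < β 0 + β 3 + β 5 - β 4 := by linarith
        linarith [hprod, mul_pos hX' (by linarith : (0:ℝ) < -(β 0 + β 5 + β 6 - β 1))]
      rcases le_total (β 1) (β 4) with hbe | hbe <;>
        rcases le_total (β 3) (β 6) with hdg | hdg <;>
        simp [min_eq_left, min_eq_right, hbe, hdg] <;> linarith
end

section
/- Consider positive reals β₁,…,β₆ with β₂ − β₁ = β₄ − β₃ = β₆ − β₅ =: ε > 0 (equilibrium fluxes of the reversible Lotka–Volterra autocatalator with β₂ > β₁). Define a flux γ on the E-graph H₂ in ℝ² with edges 2e₁→3e₁ and 3e₁→2e₁ both carrying β₁+ε, e₁+e₂→2e₂ carrying β₃+ε/2, 2e₂→e₁+e₂ carrying β₃+ε, e₂→0 carrying β₅+ε/2, 0→e₂ carrying β₅+ε, e₂→2e₂ carrying ε/2, e₁+e₂→2e₁ carrying ε/2, and 2e₁→0 carrying ε/2. Then γ is a vertex-balanced flux on H₂, and (G,β) and (H₂,γ) are dynamically equal. -/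
/-- Equilibrium fluxes `β` of the reversible Lotka–Volterra
autocatalator `G` (edges `2e₁→3e₁`, `3e₁→2e₁`, `e₁+e₂→2e₂`, `2e₂→e₁+e₂`, `e₂→0`,
`0→e₂` with fluxes `β₁,…,β₆`) with `ε := β₂ − β₁ > 0` are realized by the explicit
flux `γ` on `H₂` (edges `2e₁⇄3e₁` carrying `β₁+ε`, `e₁+e₂→2e₂` carrying `β₃+ε/2`,
`2e₂→e₁+e₂` carrying `β₃+ε`, `e₂→0` carrying `β₅+ε/2`, `0→e₂` carrying `β₅+ε`,
`e₂→2e₂`, `e₁+e₂→2e₁`, `2e₁→0` each carrying `ε/2`), which is positive,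
vertex-balanced on `H₂`, and dynamically equal to `(G,β)` at every source vertex. -/
theorem stmt_12 (β : Fin 6 → ℝ) (ε : ℝ) (hpos : ∀ i, 0 < β i)
    (hε : ε = β 1 - β 0) (hεpos : 0 < ε)
    (h1 : β 1 - β 0 = β 3 - β 2) (h2 : β 3 - β 2 = β 5 - β 4) :
    -- all flux values of γ are positive
    (0 < β 0 + ε ∧ 0 < β 2 + ε / 2 ∧ 0 < β 2 + ε ∧ 0 < β 4 + ε / 2 ∧ 0 < β 4 + ε ∧
      0 < ε / 2) ∧
    -- vertex balance on H₂ (at 0, e₂, 2e₂, e₁+e₂, 2e₁, 3e₁)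
    ((β 4 + ε / 2) + ε / 2 = β 4 + ε ∧
     β 4 + ε = (β 4 + ε / 2) + ε / 2 ∧
     (β 2 + ε / 2) + ε / 2 = β 2 + ε ∧
     β 2 + ε = (β 2 + ε / 2) + ε / 2 ∧
     (β 0 + ε) + ε / 2 = (β 0 + ε) + ε / 2 ∧
     β 0 + ε = β 0 + ε) ∧
    -- dynamical equality at the six source vertices (displacement vectors in ℝ²)
    (β 0 • (((1 : ℝ), (0 : ℝ)))
        = (β 0 + ε) • (((1 : ℝ), (0 : ℝ))) + (ε / 2) • (((-2 : ℝ), (0 : ℝ))) ∧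
     β 1 • (((-1 : ℝ), (0 : ℝ))) = (β 0 + ε) • (((-1 : ℝ), (0 : ℝ))) ∧
     β 2 • (((-1 : ℝ), (1 : ℝ)))
        = (β 2 + ε / 2) • (((-1 : ℝ), (1 : ℝ))) + (ε / 2) • (((1 : ℝ), (-1 : ℝ))) ∧
     β 3 • (((1 : ℝ), (-1 : ℝ))) = (β 2 + ε) • (((1 : ℝ), (-1 : ℝ))) ∧
     β 4 • (((0 : ℝ), (-1 : ℝ)))
        = (β 4 + ε / 2) • (((0 : ℝ), (-1 : ℝ))) + (ε / 2) • (((0 : ℝ), (1 : ℝ))) ∧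
     β 5 • (((0 : ℝ), (1 : ℝ))) = (β 4 + ε) • (((0 : ℝ), (1 : ℝ)))) := by
  have h0 := hpos 0
  have h2' := hpos 2
  have h4 := hpos 4
  refine ⟨⟨by linarith, by linarith, by linarith, by linarith, by linarith, by linarith⟩,
    ⟨by ring, by ring, by ring, by ring, by ring, by ring⟩, ?_⟩
  simp only [Prod.ext_iff, Prod.smul_mk, Prod.mk_add_mk, smul_eq_mul]
  refine ⟨⟨by linarith, by ring⟩, ⟨by linarith, by ring⟩, ⟨by linarith, by linarith⟩,
    ⟨by linarith, by linarith⟩, ⟨by ring, by linarith⟩, ⟨by ring, by linarith⟩⟩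
end

section
/- Let G be the tetrahedron E-graph in ℝ³ with reversible edge pairs 0⇄e₁ (fluxes β₁,β₂), e₁⇄2e₁ (β₃,β₄), e₁⇄e₂+e₃ (β₅,β₆), 2e₂⇄e₂+e₃ (β₇,β₈), e₂+e₃⇄2e₃ (β₉,β₁₀). For every β ∈ ℝ_{>0}^{10} in the equilibrium flux cone F^eq(G) = {β : β₁ − β₂ + β₃ − β₄ = 0, β₅ − β₆ = 0, β₇ − β₈ + β₉ − β₁₀ = 0}, the vector γ ∈ ℝ_{>0}^{10} defined by γ₁ = γ₂ = β₁, γ₃ = γ₄ = β₄, γ₅ = γ₆ = β₅, γ₇ = γ₈ = β₇, γ₉ = γ₁₀ = β₁₀ is the unique solution of the system consisting of the dynamical-equality equations (β₁ = γ₁, β₄ = γ₄, β₅ = γ₅, β₆ = γ₆, β₇ = γ₇, β₁₀ = γ₁₀, β₃ − β₂ − β₅ = γ₃ − γ₂ − γ₅, β₈ − β₉ − β₆ = γ₈ − γ₉ − γ₆, β₈ − β₉ + β₆ = γ₈ − γ₉ + γ₆) together with the vertex-balance equations (γ₁ = γ₂, γ₄ = γ₃, γ₇ = γ₈, γ₁₀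 = γ₉, γ₂ + γ₃ + γ₅ = γ₁ + γ₄ + γ₆, γ₈ + γ₉ + γ₆ = γ₇ + γ₁₀ + γ₅). Consequently F^dt(G,G) = F^eq(G), i.e., every equilibrium flux of G is realized by a vertex-balanced flux on G itself that is dynamically equal to it. -/
/-- Dynamical-equality equations between `(G,β)` and `(G,γ)` for the tetrahedron network
(fluxes indexed `β₁,…,β₁₀` as `β 0,…,β 9`). -/
def DE13 (β γ : Fin 10 → ℝ) : Prop :=
  β 0 = γ 0 ∧ β 3 = γ 3 ∧ β 4 = γ 4 ∧ β 5 = γ 5 ∧ β 6 = γ 6 ∧ β 9 = γ 9 ∧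
  β 2 - β 1 - β 4 = γ 2 - γ 1 - γ 4 ∧
  β 7 - β 8 - β 5 = γ 7 - γ 8 - γ 5 ∧
  β 7 - β 8 + β 5 = γ 7 - γ 8 + γ 5

/-- Vertex-balance equations for a flux `γ` on the tetrahedron network. -/
def VB13 (γ : Fin 10 → ℝ) : Prop :=
  γ 0 = γ 1 ∧ γ 3 = γ 2 ∧ γ 6 = γ 7 ∧ γ 9 = γ 8 ∧
  γ 1 + γ 2 + γ 4 = γ 0 + γ 3 + γ 5 ∧
  γ 7 + γ 8 + γ 5 = γ 6 + γ 9 + γ 4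

lemma main13 (β : Fin 10 → ℝ) (hpos : ∀ i, 0 < β i)
    (h1 : β 0 - β 1 + β 2 - β 3 = 0) (h2 : β 4 - β 5 = 0)
    (h3 : β 6 - β 7 + β 8 - β 9 = 0) :
    (∀ i, 0 < ![β 0, β 0, β 3, β 3, β 4, β 4, β 6, β 6, β 9, β 9] i) ∧
     DE13 β ![β 0, β 0, β 3, β 3, β 4, β 4, β 6, β 6, β 9, β 9] ∧
     VB13 ![β 0, β 0, β 3, β 3, β 4, β 4, β 6, β 6, β 9, β 9] ∧
     (∀ γ : Fin 10 → ℝ, DE13 β γ → VB13 γ →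
        γ = ![β 0, β 0, β 3, β 3, β 4, β 4, β 6, β 6, β 9, β 9]) := by
  refine ⟨?_, ?_, ?_, ?_⟩
  · intro i
    fin_cases i <;>
      first
        | exact hpos 0 | exact hpos 3 | exact hpos 4 | exact hpos 6 | exact hpos 9
  · exact ⟨rfl, rfl, rfl, show β 5 = β 4 by linarith, rfl, rfl,
      show β 2 - β 1 - β 4 = β 3 - β 0 - β 4 by linarith,
      show β 7 - β 8 - β 5 = β 6 - β 9 - β 4 by linarith,
      show β 7 - β 8 + β 5 = β 6 - β 9 + β 4 by linarith⟩
  · exact ⟨rfl, rfl, rfl, rfl, rfl, rfl⟩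
  · rintro γ ⟨d1, d2, d3, d4, d5, d6, d7, d8, d9⟩ ⟨v1, v2, v3, v4, v5, v6⟩
    funext i
    fin_cases i
    · show γ 0 = β 0; linarith
    · show γ 1 = β 0; linarith
    · show γ 2 = β 3; linarith
    · show γ 3 = β 3; linarith
    · show γ 4 = β 4; linarith
    · show γ 5 = β 4; linarith
    · show γ 6 = β 6; linarith
    · show γ 7 = β 6; linarith
    · show γ 8 = β 9; linarith
    · show γ 9 = β 9; linarith

/-- For every `β ∈ F^eq(G)` of the tetrahedron network, the vector
`γ = (β₁, β₁, β₄, β₄, β₅, β₅, β₇, β₇, β₁₀, β₁₀)` is positive and is the unique solution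
of the dynamical-equality plus vertex-balance system; consequently
`F^dt(G,G) = F^eq(G)`. -/
theorem stmt_13 (β : Fin 10 → ℝ) (hpos : ∀ i, 0 < β i)
    (h1 : β 0 - β 1 + β 2 - β 3 = 0) (h2 : β 4 - β 5 = 0)
    (h3 : β 6 - β 7 + β 8 - β 9 = 0) :
    ((∀ i, 0 < ![β 0, β 0, β 3, β 3, β 4, β 4, β 6, β 6, β 9, β 9] i) ∧
     DE13 β ![β 0, β 0, β 3, β 3, β 4, β 4, β 6, β 6, β 9, β 9] ∧
     VB13 ![β 0, β 0, β 3, β 3, β 4, β 4, β 6, β 6, β 9, β 9] ∧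
     (∀ γ : Fin 10 → ℝ, DE13 β γ → VB13 γ →
        γ = ![β 0, β 0, β 3, β 3, β 4, β 4, β 6, β 6, β 9, β 9])) ∧
    -- consequently F^dt(G,G) = F^eq(G):
    (∀ β' : Fin 10 → ℝ, (∀ i, 0 < β' i) →
      ((∃ γ : Fin 10 → ℝ, (∀ i, 0 < γ i) ∧ DE13 β' γ ∧ VB13 γ) ↔
        (β' 0 - β' 1 + β' 2 - β' 3 = 0 ∧ β' 4 - β' 5 = 0 ∧
         β' 6 - β' 7 + β' 8 - β' 9 = 0))) := by
  refine ⟨main13 β hpos h1 h2 h3, ?_⟩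
  intro β' hpos'
  constructor
  · rintro ⟨γ, -, ⟨d1, d2, d3, d4, d5, d6, d7, d8, d9⟩, ⟨v1, v2, v3, v4, v5, v6⟩⟩
    refine ⟨by linarith, by linarith, by linarith⟩
  · rintro ⟨e1, e2, e3⟩
    obtain ⟨p, de, vb, -⟩ := main13 β' hpos' e1 e2 e3
    exact ⟨_, p, de, vb⟩
end

section
/- Let G be the basic clock mechanism E-graph in ℝ³ with species ordering (T, P, C), vertices 0, e₁, e₂, e₁+e₂, e₃, and edges 0⇄e₁ (fluxes β₁,β₂), 0⇄e₂ (β₃,β₄), e₁+e₂⇄e₃ (β₅,β₆), and e₃→0 (β₇). Then F^eq(G) = {β ∈ ℝ_{>0}^7 : β₁ − β₂ = β₃ − β₄ = β₅ − β₆ = β₇}, and for every β ∈ F^eq(G), the flux γ on the E-graph G^max (obtained from G by adding the edge 0→e₁+e₂) given by γ_{0→e₁} = γ_{e₁→0} = β₂, γ_{0→e₂} = γ_{e₂→0} = β₄, γ_{e₁+e₂→e₃} = β₆ + β₇, γ_{e₃→e₁+e₂} = β₆, γ_{e₃→0} = β₇, γ_{0→e₁+e₂} = β₇ is vertex-balanced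 and (G,β) is dynamically equal to (G^max,γ). Hence F^dt(G) = F^eq(G). -/
open scoped Classical

noncomputable section

/-- Points of `ℝ³` (species ordering `(T, P, C)`). -/
abbrev Pt : Type := Fin 3 → ℝ

/-- A flux `γ` (zero outside `E`) is vertex-balanced on the edge set `E`. -/
def balanced (E : Finset (Pt × Pt)) (γ : Pt × Pt → ℝ) : Prop :=
  ∀ v : Pt, ∑ e ∈ E.filter (fun e => e.2 = v), γ e
    = ∑ e ∈ E.filter (fun e => e.1 = v), γ e

/-- `(E₁,γ₁)` and `(E₂,γ₂)` are dynamically equal (flux sense):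
at every source vertex the flux-weighted displacement sums agree. -/
def dynEq (E₁ : Finset (Pt × Pt)) (γ₁ : Pt × Pt → ℝ)
    (E₂ : Finset (Pt × Pt)) (γ₂ : Pt × Pt → ℝ) : Prop :=
  ∀ v : Pt, ∑ e ∈ E₁.filter (fun e => e.1 = v), γ₁ e • (e.2 - e.1)
    = ∑ e ∈ E₂.filter (fun e => e.1 = v), γ₂ e • (e.2 - e.1)

def e1 : Pt := ![1, 0, 0]
def e2 : Pt := ![0, 1, 0]
def e3 : Pt := ![0, 0, 1]

/-- The edges of the basic clock mechanism `G`: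
`0⇄e₁` (β₁,β₂), `0⇄e₂` (β₃,β₄), `e₁+e₂⇄e₃` (β₅,β₆), `e₃→0` (β₇). -/
def clockEdges : Finset (Pt × Pt) :=
  {(0, e1), (e1, 0), (0, e2), (e2, 0), (e1 + e2, e3), (e3, e1 + e2), (e3, 0)}

/-- `G^max` is obtained from `G` by adding the edge `0 → e₁+e₂`. -/
def clockMaxEdges : Finset (Pt × Pt) := insert (0, e1 + e2) clockEdges

/-- The equilibrium flux cone of the E-graph with edge set `E`. -/
def Feq (E : Finset (Pt × Pt)) : Set (Pt × Pt → ℝ) :=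
  {β | (∀ e ∈ E, 0 < β e) ∧ ∑ e ∈ E, β e • (e.2 - e.1) = 0}

/-- The disguised toric flux cone: equilibrium-like fluxes on `E` realizable by a
vertex-balanced flux on some E-graph that is dynamically equal to it. -/
def Fdt (E : Finset (Pt × Pt)) : Set (Pt × Pt → ℝ) :=
  {β | (∀ e ∈ E, 0 < β e) ∧
    ∃ (EH : Finset (Pt × Pt)) (γ : Pt × Pt → ℝ),
      (∀ e ∈ EH, 0 < γ e) ∧ (∀ e ∉ EH, γ e = 0) ∧
      balanced EH γ ∧ dynEq E β EH γ}

/-- The explicit vertex-balanced flux on `G^max` associated with `β ∈ F^eq(G)`: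
`γ_{0→e₁} = γ_{e₁→0} = β₂`, `γ_{0→e₂} = γ_{e₂→0} = β₄`, `γ_{e₁+e₂→e₃} = β₆ + β₇`,
`γ_{e₃→e₁+e₂} = β₆`, `γ_{e₃→0} = β₇`, `γ_{0→e₁+e₂} = β₇`. -/
def clockGamma (β : Pt × Pt → ℝ) : Pt × Pt → ℝ := fun e =>
  if e = (0, e1) then β (e1, 0)
  else if e = (e1, 0) then β (e1, 0)
  else if e = (0, e2) then β (e2, 0)
  else if e = (e2, 0) then β (e2, 0)
  else if e = (e1 + e2, e3) then β (e3, e1 + e2) + β (e3, 0)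
  else if e = (e3, e1 + e2) then β (e3, e1 + e2)
  else if e = (e3, 0) then β (e3, 0)
  else if e = (0, e1 + e2) then β (e3, 0)
  else 0

/-! A vertex-balanced flux has zero net displacement (regroup the sum by vertices), and dynamical
equality preserves the net displacement (regroup by source vertices); hence `F^dt ⊆ F^eq` for
every E-graph. Conversely, for the clock mechanism an equilibrium flux satisfies
`β₁ = β₂ + β₇`, `β₃ = β₄ + β₇` and `β₅ = β₆ + β₇`: the excess `β₇` on `0 → e₁` and `0 → e₂` is
rerouted through the new edge `0 → e₁+e₂`, and the excess on `e₁+e₂ → e₃` is what leaves `e₃`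
through `e₃ → 0`, which balances every vertex of `G^max` without changing the dynamics. -/

open Finset

theorem sum_smul_eq_sum_fiberwise {ι R V : Type*} [Semiring R] [AddCommMonoid V] [Module R V]
    [DecidableEq V] {s : Finset ι} {t : Finset V} {g : ι → V} (h : ∀ i ∈ s, g i ∈ t) (c : ι → R) :
    ∑ i ∈ s, c i • g i = ∑ v ∈ t, (∑ i ∈ s with g i = v, c i) • v := by
  rw [← sum_fiberwise_of_maps_to h]
  refine sum_congr rfl fun v _ => ?_
  rw [sum_smul]
  exact sum_congr rfl fun i hi => by rw [(mem_filter.1 hi).2]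

theorem balanced.sum_smul_sub_eq_zero {E : Finset (Pt × Pt)} {γ : Pt × Pt → ℝ}
    (h : balanced E γ) : ∑ e ∈ E, γ e • (e.2 - e.1) = 0 := by
  have hsnd : ∀ e ∈ E, e.2 ∈ E.image Prod.fst ∪ E.image Prod.snd :=
    fun e he => mem_union_right _ (mem_image_of_mem _ he)
  have hfst : ∀ e ∈ E, e.1 ∈ E.image Prod.fst ∪ E.image Prod.snd :=
    fun e he => mem_union_left _ (mem_image_of_mem _ he)
  simp_rw [smul_sub, sum_sub_distrib]
  rw [sum_smul_eq_sum_fiberwise hsnd, sum_smul_eq_sum_fiberwise hfst, sub_eq_zero]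
  exact sum_congr rfl fun v _ => congrArg (· • v) (h v)

theorem dynEq.sum_smul_sub_eq {E₁ E₂ : Finset (Pt × Pt)} {γ₁ γ₂ : Pt × Pt → ℝ}
    (h : dynEq E₁ γ₁ E₂ γ₂) :
    ∑ e ∈ E₁, γ₁ e • (e.2 - e.1) = ∑ e ∈ E₂, γ₂ e • (e.2 - e.1) := by
  rw [← sum_fiberwise_of_maps_to (g := Prod.fst) (t := E₁.image Prod.fst ∪ E₂.image Prod.fst)
      fun e he => mem_union_left _ (mem_image_of_mem _ he),
    ← sum_fiberwise_of_maps_to (g := Prod.fst) (t := E₁.image Prod.fst ∪ E₂.image Prod.fst)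
      fun e he => mem_union_right _ (mem_image_of_mem _ he)]
  exact sum_congr rfl fun v _ => h v

theorem Fdt_subset_Feq (E : Finset (Pt × Pt)) : Fdt E ⊆ Feq E := by
  rintro β ⟨hpos, EH, γ, -, -, hbal, hdyn⟩
  exact ⟨hpos, hdyn.sum_smul_sub_eq.trans hbal.sum_smul_sub_eq_zero⟩

theorem Pt.ne_of_apply_ne {a b : Pt} (i : Fin 3) (h : a i ≠ b i) : a ≠ b :=
  fun hab => h (congrFun hab i)

@[simp] theorem e1_apply_zero : e1 0 = 1 := rfl
@[simp] theorem e1_apply_one : e1 1 = 0 := rfl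
@[simp] theorem e1_apply_two : e1 2 = 0 := rfl
@[simp] theorem e2_apply_zero : e2 0 = 0 := rfl
@[simp] theorem e2_apply_one : e2 1 = 1 := rfl
@[simp] theorem e2_apply_two : e2 2 = 0 := rfl
@[simp] theorem e3_apply_zero : e3 0 = 0 := rfl
@[simp] theorem e3_apply_one : e3 1 = 0 := rfl
@[simp] theorem e3_apply_two : e3 2 = 1 := rfl

@[simp] theorem zero_ne_e1 : (0 : Pt) ≠ e1 := Pt.ne_of_apply_ne 0 (by simp)
@[simp] theorem zero_ne_e2 : (0 : Pt) ≠ e2 := Pt.ne_of_apply_ne 1 (by simp)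
@[simp] theorem zero_ne_e3 : (0 : Pt) ≠ e3 := Pt.ne_of_apply_ne 2 (by simp)
@[simp] theorem zero_ne_e1_add_e2 : (0 : Pt) ≠ e1 + e2 := Pt.ne_of_apply_ne 0 (by simp)
@[simp] theorem e1_ne_e2 : e1 ≠ e2 := Pt.ne_of_apply_ne 0 (by simp)
@[simp] theorem e1_ne_e3 : e1 ≠ e3 := Pt.ne_of_apply_ne 0 (by simp)
@[simp] theorem e1_ne_e1_add_e2 : e1 ≠ e1 + e2 := Pt.ne_of_apply_ne 1 (by simp)
@[simp] theorem e2_ne_e3 : e2 ≠ e3 := Pt.ne_of_apply_ne 1 (by simp)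
@[simp] theorem e2_ne_e1_add_e2 : e2 ≠ e1 + e2 := Pt.ne_of_apply_ne 0 (by simp)
@[simp] theorem e1_add_e2_ne_e3 : e1 + e2 ≠ e3 := Pt.ne_of_apply_ne 0 (by simp)

@[simp] theorem e1_ne_zero : e1 ≠ 0 := zero_ne_e1.symm
@[simp] theorem e2_ne_zero : e2 ≠ 0 := zero_ne_e2.symm
@[simp] theorem e3_ne_zero : e3 ≠ 0 := zero_ne_e3.symm
@[simp] theorem e1_add_e2_ne_zero : e1 + e2 ≠ 0 := zero_ne_e1_add_e2.symm
@[simp] theorem e2_ne_e1 : e2 ≠ e1 := e1_ne_e2.symm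
@[simp] theorem e3_ne_e1 : e3 ≠ e1 := e1_ne_e3.symm
@[simp] theorem e1_add_e2_ne_e1 : e1 + e2 ≠ e1 := e1_ne_e1_add_e2.symm
@[simp] theorem e3_ne_e2 : e3 ≠ e2 := e2_ne_e3.symm
@[simp] theorem e1_add_e2_ne_e2 : e1 + e2 ≠ e2 := e2_ne_e1_add_e2.symm
@[simp] theorem e3_ne_e1_add_e2 : e3 ≠ e1 + e2 := e1_add_e2_ne_e3.symm

theorem clockVertex_cases (v : Pt) :
    v = 0 ∨ v = e1 ∨ v = e2 ∨ v = e1 + e2 ∨ v = e3 ∨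
      (0 ≠ v ∧ e1 ≠ v ∧ e2 ≠ v ∧ e1 + e2 ≠ v ∧ e3 ≠ v) := by
  by_cases h0 : v = 0 <;> by_cases h1 : v = e1 <;> by_cases h2 : v = e2 <;>
    by_cases h12 : v = e1 + e2 <;> by_cases h3 : v = e3 <;> simp_all [eq_comm]

theorem sum_clockEdges {M : Type*} [AddCommMonoid M] (f : Pt × Pt → M) :
    ∑ e ∈ clockEdges, f e = f (0, e1) + f (e1, 0) + f (0, e2) + f (e2, 0)
      + f (e1 + e2, e3) + f (e3, e1 + e2) + f (e3, 0) := by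
  simp only [clockEdges]
  repeat rw [sum_insert (by simp)]
  rw [sum_singleton]
  abel

theorem sum_clockMaxEdges {M : Type*} [AddCommMonoid M] (f : Pt × Pt → M) :
    ∑ e ∈ clockMaxEdges, f e = f (0, e1 + e2) + (f (0, e1) + f (e1, 0) + f (0, e2) + f (e2, 0)
      + f (e1 + e2, e3) + f (e3, e1 + e2) + f (e3, 0)) := by
  rw [clockMaxEdges, sum_insert (by simp [clockEdges]), sum_clockEdges]

theorem sum_clockEdges_smul_sub (β : Pt × Pt → ℝ) :
    ∑ e ∈ clockEdges, β e • (e.2 - e.1) =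
      ![β (0, e1) - β (e1, 0) - (β (e1 + e2, e3) - β (e3, e1 + e2)),
        β (0, e2) - β (e2, 0) - (β (e1 + e2, e3) - β (e3, e1 + e2)),
        β (e1 + e2, e3) - β (e3, e1 + e2) - β (e3, 0)] := by
  rw [sum_clockEdges]
  funext i
  fin_cases i <;> simp <;> ring

theorem mem_Feq_clockEdges_iff (β : Pt × Pt → ℝ) :
    β ∈ Feq clockEdges ↔
      ((∀ e ∈ clockEdges, 0 < β e) ∧
       β (0, e1) - β (e1, 0) = β (0, e2) - β (e2, 0) ∧
       β (0, e2) - β (e2, 0) = β (e1 + e2, e3) - β (e3, e1 + e2) ∧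
       β (e1 + e2, e3) - β (e3, e1 + e2) = β (e3, 0)) := by
  simp only [Feq, Set.mem_ofPred_eq, sum_clockEdges_smul_sub, Matrix.cons_eq_zero_iff,
    Matrix.zero_empty, and_true, sub_eq_zero]
  refine and_congr_right fun _ => ⟨fun ⟨h1, h2, h3⟩ => ⟨by linarith, by linarith, h3⟩,
    fun ⟨h1, h2, h3⟩ => ⟨by linarith, by linarith, h3⟩⟩

section clockGamma

variable (β : Pt × Pt → ℝ)

@[simp] theorem clockGamma_zero_e1 : clockGamma β (0, e1) = β (e1, 0) := by simp [clockGamma]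
@[simp] theorem clockGamma_e1_zero : clockGamma β (e1, 0) = β (e1, 0) := by simp [clockGamma]
@[simp] theorem clockGamma_zero_e2 : clockGamma β (0, e2) = β (e2, 0) := by simp [clockGamma]
@[simp] theorem clockGamma_e2_zero : clockGamma β (e2, 0) = β (e2, 0) := by simp [clockGamma]
@[simp] theorem clockGamma_e1_add_e2_e3 :
    clockGamma β (e1 + e2, e3) = β (e3, e1 + e2) + β (e3, 0) := by simp [clockGamma]
@[simp] theorem clockGamma_e3_e1_add_e2 :
    clockGamma β (e3, e1 + e2) = β (e3, e1 + e2) := by simp [clockGamma]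
@[simp] theorem clockGamma_e3_zero : clockGamma β (e3, 0) = β (e3, 0) := by simp [clockGamma]
@[simp] theorem clockGamma_zero_e1_add_e2 :
    clockGamma β (0, e1 + e2) = β (e3, 0) := by simp [clockGamma]

theorem clockGamma_pos (hβ : ∀ e ∈ clockEdges, 0 < β e) :
    ∀ e ∈ clockMaxEdges, 0 < clockGamma β e := by
  have h1 := hβ (e1, 0) (by simp [clockEdges])
  have h2 := hβ (e2, 0) (by simp [clockEdges])
  have h3 := hβ (e3, e1 + e2) (by simp [clockEdges])
  have h4 := hβ (e3, 0) (by simp [clockEdges])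
  simp only [clockMaxEdges, clockEdges, mem_insert, mem_singleton, forall_eq_or_imp, forall_eq,
    clockGamma_zero_e1, clockGamma_e1_zero, clockGamma_zero_e2, clockGamma_e2_zero,
    clockGamma_e1_add_e2_e3, clockGamma_e3_e1_add_e2, clockGamma_e3_zero,
    clockGamma_zero_e1_add_e2]
  exact ⟨h4, h1, h1, h2, h2, add_pos h3 h4, h3, h4⟩

theorem clockGamma_of_notMem {e : Pt × Pt} (he : e ∉ clockMaxEdges) : clockGamma β e = 0 := by
  simp only [clockMaxEdges, clockEdges, mem_insert, mem_singleton, not_or] at he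
  simp [clockGamma, he]

theorem balanced_clockGamma : balanced clockMaxEdges (clockGamma β) := by
  intro v
  rw [sum_filter, sum_filter, sum_clockMaxEdges, sum_clockMaxEdges]
  rcases clockVertex_cases v with rfl | rfl | rfl | rfl | rfl | ⟨hv0, hv1, hv2, hv12, hv3⟩ <;>
    simp [*] <;> ring

theorem dynEq_clockGamma (hβ : β ∈ Feq clockEdges) :
    dynEq clockEdges β clockMaxEdges (clockGamma β) := by
  obtain ⟨-, h1, h2, h3⟩ := (mem_Feq_clockEdges_iff β).1 hβ
  have hdisc : β (e1 + e2, e3) = β (e3, e1 + e2) + β (e3, 0) := by linarith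
  intro v
  rw [sum_filter, sum_filter, sum_clockEdges, sum_clockMaxEdges]
  rcases clockVertex_cases v with rfl | rfl | rfl | rfl | rfl | ⟨hv0, hv1, hv2, hv12, hv3⟩
  · funext i
    fin_cases i <;> simp <;> linarith
  all_goals simp [*]

end clockGamma

theorem Feq_subset_Fdt_clockEdges : Feq clockEdges ⊆ Fdt clockEdges := fun β hβ =>
  ⟨hβ.1, clockMaxEdges, clockGamma β, clockGamma_pos β hβ.1, fun _ => clockGamma_of_notMem β,
    balanced_clockGamma β, dynEq_clockGamma β hβ⟩

/-- For the basic clock mechanism `G`: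
`F^eq(G) = {β > 0 : β₁ − β₂ = β₃ − β₄ = β₅ − β₆ = β₇}`; for every `β ∈ F^eq(G)` the
explicit flux `clockGamma β` on `G^max` is positive, vertex-balanced, and dynamically
equal to `(G,β)`; hence `F^dt(G) = F^eq(G)`. -/
theorem stmt_16 :
    (∀ β : Pt × Pt → ℝ,
      β ∈ Feq clockEdges ↔
        ((∀ e ∈ clockEdges, 0 < β e) ∧
         β (0, e1) - β (e1, 0) = β (0, e2) - β (e2, 0) ∧
         β (0, e2) - β (e2, 0) = β (e1 + e2, e3) - β (e3, e1 + e2) ∧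
         β (e1 + e2, e3) - β (e3, e1 + e2) = β (e3, 0))) ∧
    (∀ β ∈ Feq clockEdges,
      (∀ e ∈ clockMaxEdges, 0 < clockGamma β e) ∧
      (∀ e ∉ clockMaxEdges, clockGamma β e = 0) ∧
      balanced clockMaxEdges (clockGamma β) ∧
      dynEq clockEdges β clockMaxEdges (clockGamma β)) ∧
    Fdt clockEdges = Feq clockEdges :=
  ⟨mem_Feq_clockEdges_iff,
    fun β hβ => ⟨clockGamma_pos β hβ.1, fun _ => clockGamma_of_notMem β, balanced_clockGamma β,
      dynEq_clockGamma β hβ⟩,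
    (Fdt_subset_Feq clockEdges).antisymm Feq_subset_Fdt_clockEdges⟩

end
end
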